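/- For every s ≥ 0 and every real polynomial p with deg p < 2^s, one has ∫ (P_{2^s} + r_s/2)·p dμ = 0. Consequently the monic orthogonal polynomial Q_{2^s} with respect to μ coincides with the Chebyshev polynomial: Q_{2^s} = P_{2^s} + r_s/2. -/

import Mathlib

open Polynomial MeasureTheory Filter

/-- `r γ s` : the recursively defined scales `r 0 = 1`, `r (s+1) = γ (s+1) * (r s)²`. -/
noncomputable def r (γ : ℕ → ℝ) : ℕ → ℝ
  | 0 => 1
  | s + 1 => γ (s + 1) * (r γ s) ^ 2

/-- `P γ s` : the polynomial `P_{2^s}`, with `P_1 = X - 1` and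
`P_{2^{s+1}} = P_{2^s} · (P_{2^s} + r_s)`. -/
noncomputable def P (γ : ℕ → ℝ) : ℕ → Polynomial ℝ
  | 0 => X - 1
  | s + 1 => P γ s * (P γ s + C (r γ s))

/-- The integral `∫ f dν_s` of a function `f` against the normalized counting measure `ν_s`
on the `2^s` (simple, real) zeros of `P_{2^s} + r_s/2`. -/
noncomputable def nuInt (γ : ℕ → ℝ) (s : ℕ) (f : ℝ → ℝ) : ℝ :=
  (((P γ s + C (r γ s / 2)).roots.map f).sum) / 2 ^ s


/-!
Since `0 < c < r_{s+1} < r_s² / 4`, the polynomial `P_{2^{s+1}} + c = P_{2^s} (P_{2^s} + r_s) + c`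
factors as `(P_{2^s} + c₁)(P_{2^s} + c₂)` with `c₁, c₂ ∈ (0, r_s)` and `c₁ + c₂ = r_s`, so the zeros
of `P_{2^u} + c` (`u > s`) split into zero sets of polynomials `P_{2^s} + e`, `e ∈ (0, r_s)`.
On the zeros of `P_{2^s} + e` a polynomial `f` equals `(f mod P_{2^s}) - e (f div P_{2^s})`; by
induction on `s` this shows that for `deg f < 2^s` the sum of `f` over the zeros of `P_{2^s} + e`
does not depend on `e`. Summing `(P_{2^s} + r_s/2) p` over the zeros of `P_{2^{s+1}} + c` then gives
`(r_s/2 - c₁ + r_s/2 - c₂) N = 0`, so `∫ (P_{2^s} + r_s/2) p dν_u = 0` for all `u > s`, and the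
orthogonality passes to the limit `μ`. A monic polynomial of degree `n` orthogonal to all
polynomials of lower degree is unique, which identifies `Q_{2^s}`.
-/

section RootSum

variable {R : Type*} [CommRing R] [IsDomain R]

noncomputable def rootSum (q f : R[X]) : R :=
  (q.roots.map f.eval).sum

lemma rootSum_congr {q f g : R[X]} (h : ∀ x ∈ q.roots, f.eval x = g.eval x) :
    rootSum q f = rootSum q g := by
  rw [rootSum, rootSum, Multiset.map_congr rfl h]

lemma rootSum_add (q f g : R[X]) : rootSum q (f + g) = rootSum q f + rootSum q g := by
  simp only [rootSum, eval_add, Multiset.sum_map_add]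

lemma rootSum_C_mul (q f : R[X]) (a : R) : rootSum q (C a * f) = a * rootSum q f := by
  simp only [rootSum, eval_mul, eval_C, Multiset.sum_map_mul_left]

lemma rootSum_mul {p q : R[X]} (hpq : p * q ≠ 0) (f : R[X]) :
    rootSum (p * q) f = rootSum p f + rootSum q f := by
  rw [rootSum, roots_mul hpq, Multiset.map_add, Multiset.sum_add, rootSum, rootSum]

lemma rootSum_add_C_mul_left (q g : R[X]) (e : R) :
    rootSum (q + C e) (q * g) = -e * rootSum (q + C e) g := by
  rw [← rootSum_C_mul]
  refine rootSum_congr fun x hx => ?_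
  have hqx : q.eval x = -e := eq_neg_of_add_eq_zero_left (by simpa using isRoot_of_mem_roots hx)
  simp [hqx]

lemma rootSum_add_C_eq_modByMonic_sub (q f : R[X]) (e : R) :
    rootSum (q + C e) f = rootSum (q + C e) (f %ₘ q) - e * rootSum (q + C e) (f /ₘ q) := by
  conv_lhs => rw [← modByMonic_add_div f q]
  rw [rootSum_add, rootSum_add_C_mul_left]
  ring

end RootSum

lemma degree_divByMonic_lt_of_degree_lt_add {R : Type*} [CommRing R] {f q : R[X]}
    (hq : q.Monic) {n : ℕ} (hf : f.degree < (q.natDegree + n : ℕ)) : (f /ₘ q).degree < n := by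
  nontriviality R
  rcases eq_or_ne (f /ₘ q) 0 with h | h
  · simp [h]
  have hqf : q.natDegree ≤ f.natDegree :=
    natDegree_le_natDegree (not_lt.mp (mt (divByMonic_eq_zero_iff hq).mpr h))
  have hf0 : f ≠ 0 := by rintro rfl; exact h (zero_divByMonic q)
  have hfn := (natDegree_lt_iff_degree_lt hf0).mpr hf
  rw [degree_eq_natDegree h, natDegree_divByMonic f hq, Nat.cast_lt]
  omega

lemma eq_of_monic_of_orthogonal {μ : Measure ℝ}
    (hμint : ∀ p : ℝ[X], Integrable (fun x => p.eval x) μ)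
    (hμpos : ∀ p : ℝ[X], p ≠ 0 → 0 < ∫ x, (p.eval x) ^ 2 ∂μ)
    {Q R : ℝ[X]} {n : ℕ} (hQ : Q.Monic) (hR : R.Monic) (hQn : Q.natDegree = n)
    (hRn : R.natDegree = n)
    (hQorth : ∀ p : ℝ[X], p.degree < n → ∫ x, Q.eval x * p.eval x ∂μ = 0)
    (hRorth : ∀ p : ℝ[X], p.degree < n → ∫ x, R.eval x * p.eval x ∂μ = 0) :
    Q = R := by
  by_contra hne
  set D := Q - R
  have hdeg : Q.degree = R.degree := by
    rw [degree_eq_natDegree hQ.ne_zero, degree_eq_natDegree hR.ne_zero, hQn, hRn]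
  have hD : D.degree < n := by
    simpa [degree_eq_natDegree hQ.ne_zero, hQn] using
      degree_sub_lt_left hdeg hQ.ne_zero (hQ.leadingCoeff.trans hR.leadingCoeff.symm)
  have hsq : ∫ x, (D.eval x) ^ 2 ∂μ = 0 :=
    calc ∫ x, (D.eval x) ^ 2 ∂μ
        = ∫ x, (Q.eval x * D.eval x - R.eval x * D.eval x) ∂μ := by
          congr 1 with x
          simp only [D, eval_sub]
          ring
      _ = (∫ x, Q.eval x * D.eval x ∂μ) - ∫ x, R.eval x * D.eval x ∂μ := by
          refine integral_sub ?_ ?_ <;> simpa only [eval_mul] using hμint (_ * D)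
      _ = 0 := by rw [hQorth D hD, hRorth D hD, sub_zero]
  exact (hμpos D (sub_ne_zero.mpr hne)).ne' hsq

lemma exists_pos_add_eq_mul_eq {a c : ℝ} (ha : 0 < a) (hc : 0 < c) (hca : 4 * c < a ^ 2) :
    ∃ c₁ c₂ : ℝ, 0 < c₁ ∧ 0 < c₂ ∧ c₁ + c₂ = a ∧ c₁ * c₂ = c := by
  set d := Real.sqrt (a ^ 2 - 4 * c)
  have hd2 : d ^ 2 = a ^ 2 - 4 * c := Real.sq_sqrt (by linarith)
  have hd0 : 0 ≤ d := Real.sqrt_nonneg _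
  have hda : d < a := by nlinarith
  exact ⟨(a - d) / 2, (a + d) / 2, by linarith, by linarith, by ring,
    by linear_combination hd2 / -4⟩

lemma monic_add_C_of_natDegree_pos {R : Type*} [CommRing R] {p : R[X]} (hp : p.Monic)
    (hd : 0 < p.natDegree) (c : R) : (p + C c).Monic :=
  hp.add_of_left (degree_C_le.trans_lt (natDegree_pos_iff_degree_pos.mp hd))

lemma monic_P_and_natDegree_P (γ : ℕ → ℝ) : ∀ s, (P γ s).Monic ∧ (P γ s).natDegree = 2 ^ s
  | 0 => by simpa [P] using ⟨monic_X_sub_C (1 : ℝ), natDegree_X_sub_C (1 : ℝ)⟩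
  | s + 1 => by
    obtain ⟨hm, hd⟩ := monic_P_and_natDegree_P γ s
    have hm' := monic_add_C_of_natDegree_pos hm (hd ▸ Nat.two_pow_pos s) (r γ s)
    exact ⟨hm.mul hm', by rw [P, hm.natDegree_mul hm', natDegree_add_C, hd, pow_succ, mul_two]⟩

lemma monic_P_add_C (γ : ℕ → ℝ) (s : ℕ) (c : ℝ) : (P γ s + C c).Monic :=
  monic_add_C_of_natDegree_pos (monic_P_and_natDegree_P γ s).1
    ((monic_P_and_natDegree_P γ s).2 ▸ Nat.two_pow_pos s) c

lemma natDegree_P_add_C (γ : ℕ → ℝ) (s : ℕ) (c : ℝ) : (P γ s + C c).natDegree = 2 ^ s := by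
  rw [natDegree_add_C, (monic_P_and_natDegree_P γ s).2]

section Cantor

open Set

variable {γ : ℕ → ℝ}

lemma r_pos (hγ : ∀ s, 0 < γ (s + 1)) : ∀ s, 0 < r γ s
  | 0 => one_pos
  | s + 1 => mul_pos (hγ s) (pow_pos (r_pos hγ s) 2)

lemma half_r_mem_Ioo (hγ : ∀ s, 0 < γ (s + 1)) (s : ℕ) : r γ s / 2 ∈ Ioo 0 (r γ s) :=
  ⟨half_pos (r_pos hγ s), half_lt_self (r_pos hγ s)⟩

lemma P_succ_add_C_eq_mul {s : ℕ} (hr : 0 < r γ s) (hγ : γ (s + 1) < 1 / 4) {c : ℝ}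
    (hc : c ∈ Ioo 0 (r γ (s + 1))) :
    ∃ c₁ ∈ Ioo 0 (r γ s), ∃ c₂ ∈ Ioo 0 (r γ s), c₁ + c₂ = r γ s ∧
      P γ (s + 1) + C c = (P γ s + C c₁) * (P γ s + C c₂) := by
  have hc' : 4 * c < r γ s ^ 2 := by
    have : c < γ (s + 1) * r γ s ^ 2 := hc.2
    nlinarith
  obtain ⟨c₁, c₂, h₁, h₂, hsum, hprod⟩ := exists_pos_add_eq_mul_eq hr hc.1 hc'
  refine ⟨c₁, ⟨h₁, by linarith⟩, c₂, ⟨h₂, by linarith⟩, hsum, ?_⟩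
  rw [P, ← hsum, ← hprod, C_add, C_mul]
  ring

lemma exists_rootSum_P_succ_add_C_eq_add (hγ : ∀ s, 0 < γ (s + 1) ∧ γ (s + 1) < 1 / 4)
    {s : ℕ} {c : ℝ} (hc : c ∈ Ioo 0 (r γ (s + 1))) :
    ∃ c₁ ∈ Ioo 0 (r γ s), ∃ c₂ ∈ Ioo 0 (r γ s), c₁ + c₂ = r γ s ∧ ∀ f : ℝ[X],
      rootSum (P γ (s + 1) + C c) f = rootSum (P γ s + C c₁) f + rootSum (P γ s + C c₂) f := by
  obtain ⟨c₁, h₁, c₂, h₂, hsum, hfac⟩ :=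
    P_succ_add_C_eq_mul (r_pos (fun s => (hγ s).1) s) (hγ s).2 hc
  refine ⟨c₁, h₁, c₂, h₂, hsum, fun f => ?_⟩
  rw [hfac, rootSum_mul (mul_ne_zero (monic_P_add_C γ s c₁).ne_zero (monic_P_add_C γ s c₂).ne_zero)]

lemma rootSum_P_add_C_eq_rootSum_half (hγ : ∀ s, 0 < γ (s + 1) ∧ γ (s + 1) < 1 / 4) :
    ∀ s, ∀ c ∈ Ioo 0 (r γ s), ∀ f : ℝ[X], f.degree < (2 ^ s : ℕ) →
      rootSum (P γ s + C c) f = rootSum (P γ s + C (r γ s / 2)) f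
  | 0, c, _, f, hf => by
    obtain ⟨a, rfl⟩ : ∃ a, f = C a :=
      ⟨_, eq_C_of_degree_le_zero (Nat.WithBot.lt_one_iff_le_zero.mp (by simpa using hf))⟩
    have hX : ∀ e : ℝ, P γ 0 + C e = X - C (1 - e) := fun e => by
      rw [P, C_sub, C_1]; ring
    rw [hX, hX, rootSum, rootSum, roots_X_sub_C, roots_X_sub_C]
    simp
  | s + 1, c, hc, f, hf => by
    have hdiv : (f /ₘ P γ s).degree < (2 ^ s : ℕ) :=
      degree_divByMonic_lt_of_degree_lt_add (monic_P_and_natDegree_P γ s).1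
        (by rwa [(monic_P_and_natDegree_P γ s).2, ← two_mul, ← pow_succ'])
    have hmod : (f %ₘ P γ s).degree < (2 ^ s : ℕ) := by
      simpa [degree_eq_natDegree (monic_P_and_natDegree_P γ s).1.ne_zero,
        (monic_P_and_natDegree_P γ s).2] using
        degree_modByMonic_lt f (monic_P_and_natDegree_P γ s).1
    have key : ∀ c ∈ Ioo 0 (r γ (s + 1)), rootSum (P γ (s + 1) + C c) f =
        2 * rootSum (P γ s + C (r γ s / 2)) (f %ₘ P γ s)
          - r γ s * rootSum (P γ s + C (r γ s / 2)) (f /ₘ P γ s) := by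
      intro c hc
      obtain ⟨c₁, h₁, c₂, h₂, hsum, hsplit⟩ := exists_rootSum_P_succ_add_C_eq_add hγ hc
      have ih := rootSum_P_add_C_eq_rootSum_half hγ s
      rw [hsplit, rootSum_add_C_eq_modByMonic_sub _ _ c₁, rootSum_add_C_eq_modByMonic_sub _ _ c₂,
        ih c₁ h₁ _ hdiv, ih c₁ h₁ _ hmod, ih c₂ h₂ _ hdiv, ih c₂ h₂ _ hmod, ← hsum]
      ring
    rw [key c hc, key _ (half_r_mem_Ioo (fun s => (hγ s).1) (s + 1))]

lemma rootSum_P_add_C_mul_eq_zero (hγ : ∀ s, 0 < γ (s + 1) ∧ γ (s + 1) < 1 / 4) {s : ℕ}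
    {f : ℝ[X]} (hf : f.degree < (2 ^ s : ℕ)) {u : ℕ} (hsu : s < u) :
    ∀ c ∈ Ioo 0 (r γ u), rootSum (P γ u + C c) ((P γ s + C (r γ s / 2)) * f) = 0 := by
  induction u, hsu using Nat.le_induction with
  | base =>
    intro c hc
    obtain ⟨c₁, h₁, c₂, h₂, hsum, hsplit⟩ := exists_rootSum_P_succ_add_C_eq_add hγ hc
    have piece : ∀ e ∈ Ioo 0 (r γ s), rootSum (P γ s + C e) ((P γ s + C (r γ s / 2)) * f) =
        (r γ s / 2 - e) * rootSum (P γ s + C (r γ s / 2)) f := by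
      intro e he
      rw [add_mul, rootSum_add, rootSum_add_C_mul_left, rootSum_C_mul,
        rootSum_P_add_C_eq_rootSum_half hγ s e he f hf]
      ring
    rw [hsplit, piece c₁ h₁, piece c₂ h₂]
    linear_combination (-rootSum (P γ s + C (r γ s / 2)) f) * hsum
  | succ u _ ih =>
    intro c hc
    obtain ⟨c₁, h₁, c₂, h₂, -, hsplit⟩ := exists_rootSum_P_succ_add_C_eq_add hγ hc
    rw [hsplit, ih c₁ h₁, ih c₂ h₂, add_zero]

lemma integral_P_add_half_mul_eq_zero (hγ : ∀ s, 0 < γ (s + 1) ∧ γ (s + 1) < 1 / 4)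
    {μ : Measure ℝ} (hμconv : ∀ p : ℝ[X],
      Tendsto (fun s => nuInt γ s (fun x => p.eval x)) atTop (nhds (∫ x, p.eval x ∂μ)))
    {s : ℕ} {p : ℝ[X]} (hp : p.degree < (2 ^ s : ℕ)) :
    ∫ x, ((P γ s).eval x + r γ s / 2) * p.eval x ∂μ = 0 := by
  set F := (P γ s + C (r γ s / 2)) * p
  have hν : (fun t => nuInt γ t (fun x => F.eval x)) =ᶠ[atTop] fun _ => 0 := by
    filter_upwards [eventually_gt_atTop s] with t ht
    change rootSum (P γ t + C (r γ t / 2)) F / 2 ^ t = 0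
    rw [rootSum_P_add_C_mul_eq_zero hγ hp ht _ (half_r_mem_Ioo (fun s => (hγ s).1) t), zero_div]
  simpa [F] using tendsto_nhds_unique ((hμconv F).congr' hν) tendsto_const_nhds

end Cantor

theorem stmt_4_general (γ : ℕ → ℝ) (hγ : ∀ s : ℕ, 0 < γ (s + 1) ∧ γ (s + 1) < 1 / 4)
    (μ : Measure ℝ)
    (hμint : ∀ p : Polynomial ℝ, Integrable (fun x => p.eval x) μ)
    (hμpos : ∀ p : Polynomial ℝ, p ≠ 0 → 0 < ∫ x, (p.eval x) ^ 2 ∂μ)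
    (hμconv : ∀ p : Polynomial ℝ,
      Tendsto (fun s => nuInt γ s (fun x => p.eval x)) atTop (nhds (∫ x, p.eval x ∂μ)))
    (Q : ℕ → Polynomial ℝ) (hQmonic : ∀ n, (Q n).Monic) (hQdeg : ∀ n, (Q n).natDegree = n)
    (hQorth : ∀ n : ℕ, ∀ p : Polynomial ℝ, p.degree < (n : WithBot ℕ) →
      ∫ x, (Q n).eval x * p.eval x ∂μ = 0)
    (s : ℕ) :
    (∀ p : Polynomial ℝ, p.degree < ((2 ^ s : ℕ) : WithBot ℕ) →
      ∫ x, ((P γ s).eval x + r γ s / 2) * p.eval x ∂μ = 0) ∧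
    Q (2 ^ s) = P γ s + C (r γ s / 2) := by
  have horth (p : ℝ[X]) (hp : p.degree < (2 ^ s : ℕ)) :=
    integral_P_add_half_mul_eq_zero hγ hμconv hp
  refine ⟨horth, eq_of_monic_of_orthogonal hμint hμpos (hQmonic _) (monic_P_add_C γ s _)
    (hQdeg _) (natDegree_P_add_C γ s _) (hQorth _) fun p hp => ?_⟩
  simpa using horth p hp

theorem stmt_4 (γ : ℕ → ℝ) (hγ : ∀ s : ℕ, 0 < γ (s + 1) ∧ γ (s + 1) < 1 / 4)
    (μ : Measure ℝ) [IsProbabilityMeasure μ]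
    (hμint : ∀ p : Polynomial ℝ, Integrable (fun x => p.eval x) μ)
    (hμpos : ∀ p : Polynomial ℝ, p ≠ 0 → 0 < ∫ x, (p.eval x) ^ 2 ∂μ)
    (hμconv : ∀ p : Polynomial ℝ,
      Tendsto (fun s => nuInt γ s (fun x => p.eval x)) atTop (nhds (∫ x, p.eval x ∂μ)))
    (Q : ℕ → Polynomial ℝ) (hQmonic : ∀ n, (Q n).Monic) (hQdeg : ∀ n, (Q n).natDegree = n)
    (hQorth : ∀ n : ℕ, ∀ p : Polynomial ℝ, p.degree < (n : WithBot ℕ) →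
      ∫ x, (Q n).eval x * p.eval x ∂μ = 0)
    (s : ℕ) :
    (∀ p : Polynomial ℝ, p.degree < ((2 ^ s : ℕ) : WithBot ℕ) →
      ∫ x, ((P γ s).eval x + r γ s / 2) * p.eval x ∂μ = 0) ∧
    Q (2 ^ s) = P γ s + C (r γ s / 2) :=
  stmt_4_general γ hγ μ hμint hμpos hμconv Q hQmonic hQdeg hQorth s
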